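/- If the function u: A → B is injective, then the simplicial set C(μ,u) is 1-ordered. -/

import Mathlib

/-!
`C(μ,u)` embeds into the wedge of `B` copies of `Δ[m+1]` glued along their vertices: the copy
of `Δ[m]` indexed by `b` goes to the `b`-th copy as the face `d^{m+1}`, the copy of `Δ[l+1]`
indexed by `a` goes to the `u a`-th copy along `μ + 1`. Every simplex of `C(μ,u)` is a point, a
non-constant simplex of a copy of `Δ[m]`, or a non-constant simplex of a copy of `Δ[l+1]` meeting
its last vertex; as `μ` and `u` are injective, distinct such simplices have distinct images, so
the map is a monomorphism. Being `1`-ordered passes to simplicial subsets, and the wedge is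
`1`-ordered: its vertices are ordered by `Fin (m+2)`, and its non-degenerate simplices are
injective maps `[q] ⟶ [m+1]` carrying a label, which are determined by their edges.
-/

open CategoryTheory Simplicial Opposite Limits

set_option synthInstance.maxHeartbeats 1000000
set_option maxHeartbeats 1000000

namespace Paper

def IsDegenerate (X : SSet) {n : ℕ} (x : X.obj (op (SimplexCategory.mk n))) : Prop :=
  ∃ (k : ℕ) (f : SimplexCategory.mk n ⟶ SimplexCategory.mk k)
    (y : X.obj (op (SimplexCategory.mk k))),
      k < n ∧ Function.Surjective f.toOrderHom ∧ X.map f.op y = x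

/-- The spine of `Δ[q]`: the union of the edges `{j, j+1}`, as a subcomplex of `Δ[q]`. -/
def SpineSSet (q : ℕ) : SSet where
  obj X := { σ : X.unop ⟶ SimplexCategory.mk q //
    ∃ j : ℕ, ∀ i, j ≤ (σ.toOrderHom i : ℕ) ∧ (σ.toOrderHom i : ℕ) ≤ j + 1 }
  map f := TypeCat.ofHom fun σ => ⟨f.unop ≫ σ.1, by
    obtain ⟨j, hb⟩ := σ.2
    exact ⟨j, fun i => hb _⟩⟩
  map_id X := by
    refine ConcreteCategory.hom_ext _ _ fun σ => ?_
    exact Subtype.ext (Category.id_comp _)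
  map_comp f g := by
    refine ConcreteCategory.hom_ext _ _ fun σ => ?_
    exact Subtype.ext rfl

/-- The restriction of a `q`-simplex `x` of `K` along the spine inclusion
`Sp[q] ↪ Δ[q]`, as a map of simplicial sets `Sp[q] ⟶ K`. -/
def spineRestrict (K : SSet) (q : ℕ) (x : K.obj (op (SimplexCategory.mk q))) :
    SpineSSet q ⟶ K where
  app Y := TypeCat.ofHom fun σ => K.map σ.1.op x
  naturality Y Z f := by
    refine ConcreteCategory.hom_ext _ _ fun σ => ?_
    change K.map (f.unop ≫ σ.1).op x = K.map f (K.map σ.1.op x)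
    rw [op_comp, Functor.map_comp_apply]
    rfl

/-- The edge relation on the vertices of a simplicial set: `x` is related to `y` if there
is a `1`-simplex with initial vertex `x` and final vertex `y`. -/
def EdgeRel (K : SSet) (x y : K.obj (op (SimplexCategory.mk 0))) : Prop :=
  ∃ e : K.obj (op (SimplexCategory.mk 1)),
    K.map (SimplexCategory.δ 1).op e = x ∧ K.map (SimplexCategory.δ 0).op e = y

/-- A simplicial set `K` is `1`-ordered if (i) the reflexive-transitive closure of the
edge relation on its vertices is antisymmetric, and (ii) for every `q ≥ 1`, every
non-degenerate `q`-simplex of `K` restricts along the spine inclusion `Sp[q] ↪ Δ[q]` to a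
monomorphism `Sp[q] ⟶ K`, and two non-degenerate `q`-simplices of `K` with equal
restrictions to the spine are equal. -/
def Is1Ordered (K : SSet) : Prop :=
  (∀ x y : K.obj (op (SimplexCategory.mk 0)),
      Relation.ReflTransGen (EdgeRel K) x y → Relation.ReflTransGen (EdgeRel K) y x →
        x = y) ∧
  (∀ (q : ℕ), 0 < q → ∀ x : K.obj (op (SimplexCategory.mk q)),
      ¬ IsDegenerate K x → Mono (spineRestrict K q x)) ∧
  (∀ (q : ℕ), 0 < q → ∀ x y : K.obj (op (SimplexCategory.mk q)),
      ¬ IsDegenerate K x → ¬ IsDegenerate K y →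
        spineRestrict K q x = spineRestrict K q y → x = y)


/-- The vertex `k` of `Δ[q]`, as a map `Δ[0] ⟶ Δ[q]`. -/
def stdVert (q : ℕ) (k : Fin (q + 1)) : (Δ[0] : SSet) ⟶ (Δ[q] : SSet) :=
  SSet.stdSimplex.map (SimplexCategory.const _ _ k)

/-- The vertex `k` of the standard simplex `Δ[q]`, as a `0`-simplex. -/
def vertStd (q : ℕ) (k : Fin (q + 1)) : (Δ[q] : SSet).obj (op (SimplexCategory.mk 0)) :=
  SSet.stdSimplex.objEquiv.symm (SimplexCategory.const _ _ k)

section Cone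

variable (A B : Type) (u : A → B) (l m : ℕ)
  (μ : SimplexCategory.mk l ⟶ SimplexCategory.mk m)

/-- The map `∐_{a ∈ A} Δ[l] ⟶ ∐_{b ∈ B} Δ[m]` sending the copy of `Δ[l]` indexed by `a`
into the copy of `Δ[m]` indexed by `u a` via `μ`. -/
noncomputable def toLB : (∐ fun _ : A => (Δ[l] : SSet)) ⟶ (∐ fun _ : B => (Δ[m] : SSet)) :=
  Sigma.desc fun a => SSet.stdSimplex.map μ ≫ Sigma.ι (fun _ : B => (Δ[m] : SSet)) (u a)

/-- The map `∐_{a ∈ A} Δ[l] ⟶ ∐_{a ∈ A} Δ[l+1]` given on each summand by the face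
`d^{l+1}`. -/
noncomputable def toLA1 : (∐ fun _ : A => (Δ[l] : SSet)) ⟶ (∐ fun _ : A => (Δ[l+1] : SSet)) :=
  Sigma.desc fun a =>
    SSet.stdSimplex.map (SimplexCategory.δ (Fin.last (l + 1))) ≫
      Sigma.ι (fun _ : A => (Δ[l+1] : SSet)) a

/-- The amalgam `(∐_{b ∈ B} Δ[m]) ⊔_{∐_{a ∈ A} Δ[l]} (∐_{a ∈ A} Δ[l+1])`. -/
noncomputable def LL : SSet := pushout (toLB A B u l m μ) (toLA1 A l)

/-- The left leg of the defining span of `C(μ,u)`: it picks, in the `(i,b)`-summand, the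
vertex `i` of the copy of `Δ[m]` indexed by `b`, and in the `a`-summand the vertex `l+1`
of the copy of `Δ[l+1]` indexed by `a`. -/
noncomputable def midToL :
    (∐ fun _ : ((Fin (m + 1) × B) ⊕ A) => (Δ[0] : SSet)) ⟶ LL A B u l m μ :=
  Sigma.desc fun (x : (Fin (m + 1) × B) ⊕ A) =>
    match x with
    | Sum.inl (i, b) => stdVert m i ≫ Sigma.ι (fun _ : B => (Δ[m] : SSet)) b ≫
        pushout.inl (toLB A B u l m μ) (toLA1 A l)
    | Sum.inr a => stdVert (l + 1) (Fin.last (l + 1)) ≫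
        Sigma.ι (fun _ : A => (Δ[l+1] : SSet)) a ≫
        pushout.inr (toLB A B u l m μ) (toLA1 A l)

/-- The right leg of the defining span of `C(μ,u)`: it sends the `(i,b)`-summands to the
point indexed by `i` and the `a`-summands to the point indexed by `m+1`. -/
noncomputable def midToR :
    (∐ fun _ : ((Fin (m + 1) × B) ⊕ A) => (Δ[0] : SSet)) ⟶
      (∐ fun _ : Fin (m + 2) => (Δ[0] : SSet)) :=
  Sigma.desc fun (x : (Fin (m + 1) × B) ⊕ A) =>
    match x with
    | Sum.inl (i, _) => Sigma.ι (fun _ : Fin (m + 2) => (Δ[0] : SSet)) i.castSucc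
    | Sum.inr _ => Sigma.ι (fun _ : Fin (m + 2) => (Δ[0] : SSet)) (Fin.last (m + 1))

/-- The simplicial set `C(μ,u)`, defined as the pushout of the span with legs `midToL`
and `midToR`. -/
noncomputable def CC : SSet := pushout (midToL A B u l m μ) (midToR A B m)

/-- The vertices `0, 1, …, m+1` of `C(μ,u)`, i.e. the images of the points of
`∐_{0 ≤ i ≤ m+1} Δ[0]` under the canonical map to the pushout. -/
noncomputable def vertC (i : Fin (m + 2)) :
    (CC A B u l m μ).obj (op (SimplexCategory.mk 0)) :=
  (Sigma.ι (fun _ : Fin (m + 2) => (Δ[0] : SSet)) i ≫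
      pushout.inr (midToL A B u l m μ) (midToR A B m)).app
    (op (SimplexCategory.mk 0)) (vertStd 0 0)

/-- The map `μ + 1 : [l+1] ⟶ [m+1]` extending `μ` by sending `l+1` to `m+1`. -/
def muPlus : SimplexCategory.mk (l + 1) ⟶ SimplexCategory.mk (m + 1) :=
  SimplexCategory.Hom.mk
    { toFun := fun i =>
        if h : (i : ℕ) < l + 1 then (μ.toOrderHom ⟨(i : ℕ), h⟩).castSucc
        else Fin.last (m + 1)
      monotone' := by
        intro i j hij
        by_cases hi : (i : ℕ) < l + 1 <;> by_cases hj : (j : ℕ) < l + 1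
        · simp only [hi, hj, dif_pos]
          exact Fin.castSucc_le_castSucc_iff.mpr (μ.toOrderHom.monotone hij)
        · simp only [hi, hj, dif_pos, dif_neg, not_false_iff]
          exact Fin.le_last _
        · exfalso
          have h' : (i : ℕ) ≤ (j : ℕ) := hij
          omega
        · simp only [hi, hj, dif_neg, not_false_iff]
          exact le_refl _ }



open SimplexCategory

lemma isDegenerate_iff_mem_degenerate {K : SSet} {n : ℕ} (x : K _⦋n⦌) :
    IsDegenerate K x ↔ x ∈ K.degenerate n := by
  rw [SSet.mem_degenerate_iff]
  constructor
  · rintro ⟨k, f, y, hk, hf, rfl⟩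
    exact ⟨k, hk, f, epi_iff_surjective.2 hf, y, rfl⟩
  · rintro ⟨k, hk, f, hf, y, rfl⟩
    exact ⟨k, f, y, hk, epi_iff_surjective.1 hf, rfl⟩

lemma EdgeRel.map {K K' : SSet} (f : K ⟶ K') {x y : K _⦋0⦌} (h : EdgeRel K x y) :
    EdgeRel K' (f.app _ x) (f.app _ y) := by
  obtain ⟨e, rfl, rfl⟩ := h
  exact ⟨f.app _ e, (NatTrans.naturality_apply f _ e).symm,
    (NatTrans.naturality_apply f _ e).symm⟩

lemma spineRestrict_comp {K K' : SSet} (f : K ⟶ K') (q : ℕ) (x : K _⦋q⦌) :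
    spineRestrict K q x ≫ f = spineRestrict K' q (f.app _ x) := by
  ext c σ
  exact NatTrans.naturality_apply f σ.1.op x

def spineEdge {q : ℕ} (j : Fin (q + 1)) : (SpineSSet (q + 1)).obj (op ⦋1⦌) :=
  ⟨mkOfSucc j, j, fun i => by fin_cases i <;> simp⟩

theorem Is1Ordered.of_mono {K K' : SSet} (f : K ⟶ K') [Mono f] (h : Is1Ordered K') :
    Is1Ordered K := by
  have hinj : ∀ c, Function.Injective (f.app c) := fun c =>
    (mono_iff_injective _).1 ((NatTrans.mono_iff_mono_app f).1 ‹_› c)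
  have hnd : ∀ {n} (x : K _⦋n⦌), ¬ IsDegenerate K x → ¬ IsDegenerate K' (f.app _ x) := by
    simp only [isDegenerate_iff_mem_degenerate, SSet.degenerate_iff_of_mono, imp_self,
      implies_true]
  have hpath {x y : K _⦋0⦌} (hxy : Relation.ReflTransGen (EdgeRel K) x y) :
      Relation.ReflTransGen (EdgeRel K') (f.app _ x) (f.app _ y) :=
    .lift (f.app _ ·) (fun _ _ => EdgeRel.map f) _ _ hxy
  obtain ⟨hanti, hmono, hspine⟩ := h
  refine ⟨fun x y hxy hyx => hinj _ (hanti _ _ (hpath hxy) (hpath hyx)), fun q hq x hx => ?_,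
    fun q hq x y hx hy hxy => hinj _ (hspine q hq _ _ (hnd x hx) (hnd y hy) ?_)⟩
  · have := hmono q hq _ (hnd x hx)
    rw [← spineRestrict_comp] at this
    exact mono_of_mono _ f
  · rw [← spineRestrict_comp, ← spineRestrict_comp, hxy]

def IsConst {n n' : SimplexCategory} (α : n ⟶ n') : Prop :=
  ∀ i j, α.toOrderHom i = α.toOrderHom j

section IsConst

variable {n n' n'' : SimplexCategory} {α : n ⟶ n'}

lemma IsConst.comp (g : n'' ⟶ n) (h : IsConst α) : IsConst (g ≫ α) := fun _ _ => h _ _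

lemma isConst_comp_iff_of_surjective {g : n'' ⟶ n} (hg : Function.Surjective g.toOrderHom) :
    IsConst (g ≫ α) ↔ IsConst α := by
  refine ⟨fun h i j => ?_, IsConst.comp g⟩
  obtain ⟨i, rfl⟩ := hg i
  obtain ⟨j, rfl⟩ := hg j
  exact h i j

lemma IsConst.eq_const (h : IsConst α) : α = n.const n' (α.toOrderHom 0) := by
  ext i : 3
  exact h i 0

lemma isConst_const (v : Fin (n'.len + 1)) : IsConst (n.const n' v) := fun _ _ => rfl

lemma isConst_of_zero (α : ⦋0⦌ ⟶ n') : IsConst α := fun i j => by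
  obtain rfl : i = j := Subsingleton.elim (α := Fin 1) i j
  rfl

lemma not_isConst_comp (hα : ¬ IsConst α) {f : n' ⟶ n''}
    (hf : Function.Injective f.toOrderHom) : ¬ IsConst (α ≫ f) :=
  fun h => hα fun i j => hf (h i j)

lemma not_isConst_mkOfSucc_comp {q : ℕ} {α : ⦋q + 1⦌ ⟶ n'}
    (hα : Function.Injective α.toOrderHom) (j : Fin (q + 1)) : ¬ IsConst (mkOfSucc j ≫ α) :=
  fun hc => (Fin.castSucc_lt_succ (i := j)).ne (hα (by simpa using hc 0 1))

end IsConst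

lemma δ_last_apply {k : ℕ} (i : Fin (k + 1)) :
    (δ (Fin.last (k + 1))).toOrderHom i = i.castSucc :=
  Fin.succAbove_last_apply i

lemma ext_of_mkOfSucc_comp {q : ℕ} {n : SimplexCategory} {α α' : ⦋q + 1⦌ ⟶ n}
    (h : ∀ j, mkOfSucc j ≫ α = mkOfSucc j ≫ α') : α = α' := by
  ext i : 3
  induction i using Fin.lastCases with
  | last => simpa using congr_arg (fun f => f.toOrderHom 1) (h (Fin.last q))
  | cast j => simpa using congr_arg (fun f => f.toOrderHom 0) (h j)

/-- `Wedge L k` is `L` copies of `Δ[k]` glued along their vertices: a simplex is a simplex of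
`Δ[k]` labelled by the copy it lies in, with label `none` for the shared constant simplices. -/
@[ext]
structure Wedge.Simplex (L : Type) (k : ℕ) (n : SimplexCategory) where
  hom : n ⟶ ⦋k⦌
  label : Option L
  label_eq_none_iff : label = none ↔ IsConst hom

namespace Wedge.Simplex

variable {L : Type} {k : ℕ} {n n' n'' : SimplexCategory}

open Classical in
noncomputable def restrict (g : n' ⟶ n) (p : Simplex L k n) : Simplex L k n' where
  hom := g ≫ p.hom
  label := if IsConst (g ≫ p.hom) then none else p.label
  label_eq_none_iff := by
    split_ifs with h
    · simpa using h
    · simpa [h] using fun h' => h ((p.label_eq_none_iff.1 h').comp _)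

lemma label_restrict (g : n' ⟶ n) (p : Simplex L k n) (h : ¬ IsConst (g ≫ p.hom)) :
    (p.restrict g).label = p.label := by
  classical
  exact if_neg h

lemma restrict_id (p : Simplex L k n) : p.restrict (𝟙 n) = p := by
  classical
  ext : 1
  · exact Category.id_comp _
  · change (if IsConst (𝟙 n ≫ p.hom) then none else p.label) = p.label
    split_ifs with h
    · exact (p.label_eq_none_iff.2 (by simpa using h)).symm
    · rfl

lemma restrict_comp (g : n' ⟶ n) (g' : n'' ⟶ n') (p : Simplex L k n) :
    p.restrict (g' ≫ g) = (p.restrict g).restrict g' := by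
  classical
  ext : 1
  · exact Category.assoc _ _ _
  · change (if IsConst ((g' ≫ g) ≫ p.hom) then none else p.label) =
      if IsConst (g' ≫ g ≫ p.hom) then none else
        if IsConst (g ≫ p.hom) then none else p.label
    rw [Category.assoc]
    by_cases h : IsConst (g' ≫ g ≫ p.hom)
    · rw [if_pos h, if_pos h]
    · rw [if_neg h, if_neg h, if_neg fun h' => h (h'.comp _)]

end Wedge.Simplex

noncomputable def Wedge (L : Type) (k : ℕ) : SSet where
  obj c := Wedge.Simplex L k c.unop
  map g := TypeCat.ofHom (Wedge.Simplex.restrict g.unop)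
  map_id _ := ConcreteCategory.hom_ext _ _ Wedge.Simplex.restrict_id
  map_comp g g' := ConcreteCategory.hom_ext _ _ (Wedge.Simplex.restrict_comp g.unop g'.unop)

namespace Wedge

variable {L : Type} {k : ℕ}

lemma label_map {n n' : SimplexCategory} (g : n' ⟶ n) (p : (Wedge L k).obj (op n))
    (h : ¬ IsConst (g ≫ p.hom)) : ((Wedge L k).map g.op p).label = p.label :=
  Simplex.label_restrict g p h

open Classical in
noncomputable def mk {n : SimplexCategory} (α : n ⟶ ⦋k⦌) (x : L) : (Wedge L k).obj (op n) :=
  ⟨α, if IsConst α then none else some x, by split_ifs <;> simp [*]⟩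

def pt (n : SimplexCategory) (v : Fin (k + 1)) : (Wedge L k).obj (op n) :=
  ⟨n.const ⦋k⦌ v, none, iff_of_true rfl (isConst_const v)⟩

lemma map_mk {n n' : SimplexCategory} (g : n' ⟶ n) (α : n ⟶ ⦋k⦌) (x : L) :
    (Wedge L k).map g.op (mk α x) = mk (g ≫ α) x := by
  classical
  refine Simplex.ext rfl ?_
  change (if IsConst (g ≫ α) then none else (if IsConst α then none else some x)) =
    if IsConst (g ≫ α) then none else some x
  by_cases h : IsConst (g ≫ α)
  · rw [if_pos h, if_pos h]
  · rw [if_neg h, if_neg h, if_neg fun h' => h (h'.comp g)]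

lemma map_pt {n n' : SimplexCategory} (g : n' ⟶ n) (v : Fin (k + 1)) :
    (Wedge L k).map g.op (pt n v) = pt n' v := by
  classical
  exact Simplex.ext rfl (ite_self none)

lemma mk_of_zero (α : ⦋0⦌ ⟶ ⦋k⦌) (x : L) : mk α x = pt ⦋0⦌ (α.toOrderHom 0) :=
  Simplex.ext (isConst_of_zero α).eq_const (if_pos (isConst_of_zero α))

lemma mk_inj {n : SimplexCategory} {α α' : n ⟶ ⦋k⦌} {x x' : L} (hα : ¬ IsConst α) :
    mk α x = mk α' x' ↔ α = α' ∧ x = x' := by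
  refine ⟨fun h => ?_, fun ⟨h, h'⟩ => h ▸ h' ▸ rfl⟩
  obtain rfl : α = α' := congr_arg Simplex.hom h
  have h := congr_arg Simplex.label h
  simp only [mk, if_neg hα, Option.some.injEq] at h
  exact ⟨rfl, h⟩

lemma pt_injective (n : SimplexCategory) : Function.Injective (pt (L := L) (k := k) n) :=
  fun _ _ h => congr_arg (fun p => p.hom.toOrderHom 0) h

lemma pt_ne_mk {n : SimplexCategory} {α : n ⟶ ⦋k⦌} (hα : ¬ IsConst α) (v : Fin (k + 1))
    (x : L) : pt n v ≠ mk α x := fun h => by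
  simpa [pt, mk, hα] using congr_arg Simplex.label h

lemma injective_of_not_isDegenerate {q : ℕ} (x : (Wedge L k).obj (op ⦋q + 1⦌))
    (hx : ¬ IsDegenerate _ x) : Function.Injective x.hom.toOrderHom := by
  by_contra hni
  obtain ⟨i, α, hα⟩ := eq_σ_comp_of_not_injective _ hni
  have hσ : Function.Surjective (σ i).toOrderHom := epi_iff_surjective.1 inferInstance
  refine hx ⟨q, σ i, ⟨α, x.label, ?_⟩, q.lt_succ_self, hσ, ?_⟩
  · rw [x.label_eq_none_iff, hα, isConst_comp_iff_of_surjective hσ]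
  · classical
    refine Simplex.ext hα.symm ?_
    change (if IsConst (σ i ≫ α) then none else x.label) = x.label
    rw [← hα]
    split_ifs with h
    · exact (x.label_eq_none_iff.2 h).symm
    · rfl

lemma vertex_le_of_edgeRel {x y : (Wedge L k).obj (op ⦋0⦌)} (h : EdgeRel _ x y) :
    x.hom.toOrderHom 0 ≤ y.hom.toOrderHom 0 := by
  obtain ⟨e, rfl, rfl⟩ := h
  exact e.hom.toOrderHom.monotone (by decide)

lemma vertex_le_of_reflTransGen {x y : (Wedge L k).obj (op ⦋0⦌)}
    (h : Relation.ReflTransGen (EdgeRel _) x y) : x.hom.toOrderHom 0 ≤ y.hom.toOrderHom 0 := by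
  induction h with
  | refl => exact le_rfl
  | tail _ he ih => exact ih.trans (vertex_le_of_edgeRel he)

lemma eq_of_vertex_eq {x y : (Wedge L k).obj (op ⦋0⦌)}
    (h : x.hom.toOrderHom 0 = y.hom.toOrderHom 0) : x = y := by
  refine Simplex.ext ?_ ?_
  · rw [(isConst_of_zero x.hom).eq_const, (isConst_of_zero y.hom).eq_const, h]
  · rw [x.label_eq_none_iff.2 (isConst_of_zero _), y.label_eq_none_iff.2 (isConst_of_zero _)]

theorem is1Ordered (L : Type) (k : ℕ) : Is1Ordered (Wedge L k) := by
  refine ⟨fun x y hxy hyx => ?_, fun q hq x hx => ?_, fun q hq x y hx hy hxy => ?_⟩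
  · exact eq_of_vertex_eq
      ((vertex_le_of_reflTransGen hxy).antisymm (vertex_le_of_reflTransGen hyx))
  · obtain ⟨q, rfl⟩ := Nat.exists_eq_add_one_of_ne_zero hq.ne'
    have : Mono x.hom := mono_iff_injective.2 (injective_of_not_isDegenerate x hx)
    refine (NatTrans.mono_iff_mono_app _).2 fun c => (mono_iff_injective _).2 fun σ σ' h => ?_
    exact Subtype.ext ((cancel_mono x.hom).1 (congr_arg Simplex.hom h))
  · obtain ⟨q, rfl⟩ := Nat.exists_eq_add_one_of_ne_zero hq.ne'
    have hedge (j : Fin (q + 1)) : (Wedge L k).map (mkOfSucc j).op x =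
        (Wedge L k).map (mkOfSucc j).op y :=
      ConcreteCategory.congr_hom (NatTrans.congr_app hxy _) (spineEdge j)
    have hlabel := congr_arg Simplex.label (hedge 0)
    rw [label_map _ _ (not_isConst_mkOfSucc_comp (injective_of_not_isDegenerate x hx) 0),
      label_map _ _ (not_isConst_mkOfSucc_comp (injective_of_not_isDegenerate y hy) 0)] at hlabel
    exact Simplex.ext (ext_of_mkOfSucc_comp fun j => congr_arg Simplex.hom (hedge j)) hlabel

end Wedge

universe w

lemma exists_sigma_ι_app_eq {J : Type w} (F : J → SSet.{w}) {c : SimplexCategoryᵒᵖ}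
    (x : (∐ F).obj c) : ∃ j y, (Sigma.ι F j).app c y = x := by
  obtain ⟨⟨j⟩, y, rfl⟩ := FunctorToTypes.jointly_surjective' (Discrete.functor F) c x
  exact ⟨j, y, rfl⟩

lemma pushout_inl_or_inr {X Y Z : SSet.{w}} (f : X ⟶ Y) (g : X ⟶ Z) {c : SimplexCategoryᵒᵖ}
    (x : (pushout f g).obj c) :
    (∃ y, (pushout.inl f g).app c y = x) ∨ ∃ z, (pushout.inr f g).app c z = x :=
  Types.eq_or_eq_of_isPushout ((IsPushout.of_hasPushout f g).map ((evaluation _ _).obj c)) x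

lemma app_objEquiv_symm_comp {X : SSet} {n : SimplexCategory} {j k : ℕ} (g : Δ[k] ⟶ X)
    (α : n ⟶ ⦋j⦌) (f : ⦋j⦌ ⟶ ⦋k⦌) :
    g.app (op n) (SSet.stdSimplex.objEquiv.symm (α ≫ f)) =
      (SSet.stdSimplex.map f ≫ g).app (op n) (SSet.stdSimplex.objEquiv.symm α) := by
  rw [SSet.stdSimplex.objEquiv_symm_comp]
  rfl

lemma const_eq_const_comp (n : SimplexCategory) {k : ℕ} (v : Fin (k + 1)) :
    n.const ⦋k⦌ v = n.const ⦋0⦌ 0 ≫ ⦋0⦌.const ⦋k⦌ v := by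
  rw [const_comp]
  rfl

section Cells

variable {A B l m}

lemma δ_last_comp_muPlus :
    δ (Fin.last (l + 1)) ≫ muPlus l m μ = μ ≫ δ (Fin.last (m + 1)) := by
  ext i : 3
  have hi : (i : ℕ) < l + 1 := i.isLt
  simp [muPlus, δ_last_apply, not_lt.2 (Nat.lt_succ_iff.1 hi)]

lemma muPlus_last : (muPlus l m μ).toOrderHom (Fin.last (l + 1)) = Fin.last (m + 1) := by
  simp [muPlus]

lemma muPlus_injective (hμ : Function.Injective μ.toOrderHom) :
    Function.Injective (muPlus l m μ).toOrderHom := by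
  intro i j h
  simp only [muPlus, Hom.toOrderHom_mk, OrderHom.coe_mk] at h
  split_ifs at h with hi hj hj
  · exact Fin.ext (by simpa using congr_arg Fin.val (hμ (Fin.castSucc_injective _ h)))
  · exact absurd h (Fin.castSucc_lt_last _).ne
  · exact absurd h.symm (Fin.castSucc_lt_last _).ne
  · exact Fin.ext (by omega)

namespace CC

noncomputable def ιB (b : B) : Δ[m] ⟶ CC A B u l m μ :=
  Sigma.ι (fun _ : B => Δ[m]) b ≫ pushout.inl (toLB A B u l m μ) (toLA1 A l) ≫
    pushout.inl (midToL A B u l m μ) (midToR A B m)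

noncomputable def ιA (a : A) : Δ[l + 1] ⟶ CC A B u l m μ :=
  Sigma.ι (fun _ : A => Δ[l + 1]) a ≫ pushout.inr (toLB A B u l m μ) (toLA1 A l) ≫
    pushout.inl (midToL A B u l m μ) (midToR A B m)

noncomputable def ιPt (i : Fin (m + 2)) : Δ[0] ⟶ CC A B u l m μ :=
  Sigma.ι (fun _ : Fin (m + 2) => Δ[0]) i ≫ pushout.inr (midToL A B u l m μ) (midToR A B m)

lemma map_μ_comp_ιB (a : A) :
    SSet.stdSimplex.map μ ≫ ιB u μ (u a) =
      SSet.stdSimplex.map (δ (Fin.last (l + 1))) ≫ ιA u μ a := by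
  have h1 : Sigma.ι (fun _ : A => Δ[l]) a ≫ toLB A B u l m μ =
      SSet.stdSimplex.map μ ≫ Sigma.ι (fun _ : B => Δ[m]) (u a) := Sigma.ι_desc _ _
  have h2 : Sigma.ι (fun _ : A => Δ[l]) a ≫ toLA1 A l =
      SSet.stdSimplex.map (δ (Fin.last (l + 1))) ≫ Sigma.ι (fun _ : A => Δ[l + 1]) a :=
    Sigma.ι_desc _ _
  have h := Sigma.ι (fun _ : A => Δ[l]) a ≫= pushout.condition_assoc
    (f := toLB A B u l m μ) (g := toLA1 A l) (pushout.inl (midToL A B u l m μ) (midToR A B m))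
  rw [reassoc_of% h1, reassoc_of% h2] at h
  exact h

lemma stdVert_comp_ιB (b : B) (i : Fin (m + 1)) :
    stdVert m i ≫ ιB u μ b = ιPt u μ i.castSucc := by
  have h1 : Sigma.ι (fun _ : (Fin (m + 1) × B) ⊕ A => Δ[0]) (Sum.inl (i, b)) ≫
      midToL A B u l m μ = stdVert m i ≫ Sigma.ι (fun _ : B => Δ[m]) b ≫
        pushout.inl (toLB A B u l m μ) (toLA1 A l) := Sigma.ι_desc _ _
  have h2 : Sigma.ι (fun _ : (Fin (m + 1) × B) ⊕ A => Δ[0]) (Sum.inl (i, b)) ≫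
      midToR A B m = Sigma.ι (fun _ : Fin (m + 2) => Δ[0]) i.castSucc := Sigma.ι_desc _ _
  have h := Sigma.ι (fun _ : (Fin (m + 1) × B) ⊕ A => Δ[0]) (Sum.inl (i, b)) ≫=
    pushout.condition (f := midToL A B u l m μ) (g := midToR A B m)
  rw [reassoc_of% h1, reassoc_of% h2] at h
  exact h

lemma stdVert_comp_ιA (a : A) :
    stdVert (l + 1) (Fin.last (l + 1)) ≫ ιA u μ a = ιPt u μ (Fin.last (m + 1)) := by
  have h1 : Sigma.ι (fun _ : (Fin (m + 1) × B) ⊕ A => Δ[0]) (Sum.inr a) ≫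
      midToL A B u l m μ = stdVert (l + 1) (Fin.last (l + 1)) ≫
        Sigma.ι (fun _ : A => Δ[l + 1]) a ≫ pushout.inr (toLB A B u l m μ) (toLA1 A l) :=
    Sigma.ι_desc _ _
  have h2 : Sigma.ι (fun _ : (Fin (m + 1) × B) ⊕ A => Δ[0]) (Sum.inr a) ≫
      midToR A B m = Sigma.ι (fun _ : Fin (m + 2) => Δ[0]) (Fin.last (m + 1)) := Sigma.ι_desc _ _
  have h := Sigma.ι (fun _ : (Fin (m + 1) × B) ⊕ A => Δ[0]) (Sum.inr a) ≫=
    pushout.condition (f := midToL A B u l m μ) (g := midToR A B m)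
  rw [reassoc_of% h1, reassoc_of% h2] at h
  exact h

noncomputable def ofB (b : B) {n : SimplexCategory} (α : n ⟶ ⦋m⦌) :
    (CC A B u l m μ).obj (op n) :=
  (ιB u μ b).app _ (SSet.stdSimplex.objEquiv.symm α)

noncomputable def ofA (a : A) {n : SimplexCategory} (β : n ⟶ ⦋l + 1⦌) :
    (CC A B u l m μ).obj (op n) :=
  (ιA u μ a).app _ (SSet.stdSimplex.objEquiv.symm β)

noncomputable def pt (i : Fin (m + 2)) (n : SimplexCategory) : (CC A B u l m μ).obj (op n) :=
  (ιPt u μ i).app _ (SSet.stdSimplex.objEquiv.symm (n.const ⦋0⦌ 0))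

lemma ofA_comp_δ_last (a : A) {n : SimplexCategory} (γ : n ⟶ ⦋l⦌) :
    ofA u μ a (γ ≫ δ (Fin.last (l + 1))) = ofB u μ (u a) (γ ≫ μ) := by
  rw [ofA, ofB, app_objEquiv_symm_comp, app_objEquiv_symm_comp, map_μ_comp_ιB]

lemma ofB_const (b : B) (n : SimplexCategory) (v : Fin (m + 1)) :
    ofB u μ b (n.const ⦋m⦌ v) = pt u μ v.castSucc n := by
  rw [ofB, const_eq_const_comp, app_objEquiv_symm_comp, ← stdVert, stdVert_comp_ιB, pt]

lemma ofA_const_last (a : A) (n : SimplexCategory) :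
    ofA u μ a (n.const ⦋l + 1⦌ (Fin.last (l + 1))) = pt u μ (Fin.last (m + 1)) n := by
  rw [ofA, const_eq_const_comp, app_objEquiv_symm_comp, ← stdVert, stdVert_comp_ιA, pt]

lemma simplex_cases {n : SimplexCategory} (x : (CC A B u l m μ).obj (op n)) :
    (∃ i, x = pt u μ i n) ∨ (∃ b α, x = ofB u μ b α) ∨ ∃ a β, x = ofA u μ a β := by
  rcases pushout_inl_or_inr _ _ x with ⟨y, rfl⟩ | ⟨z, rfl⟩
  · rcases pushout_inl_or_inr _ _ y with ⟨y, rfl⟩ | ⟨y, rfl⟩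
    · obtain ⟨b, y, rfl⟩ := exists_sigma_ι_app_eq _ y
      refine Or.inr (Or.inl ⟨b, SSet.stdSimplex.objEquiv y, ?_⟩)
      rw [ofB, Equiv.symm_apply_apply]
      rfl
    · obtain ⟨a, y, rfl⟩ := exists_sigma_ι_app_eq _ y
      refine Or.inr (Or.inr ⟨a, SSet.stdSimplex.objEquiv y, ?_⟩)
      rw [ofA, Equiv.symm_apply_apply]
      rfl
  · obtain ⟨i, y, rfl⟩ := exists_sigma_ι_app_eq _ z
    obtain rfl : y = SSet.stdSimplex.objEquiv.symm (n.const ⦋0⦌ 0) :=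
      SSet.stdSimplex.objEquiv.injective (Subsingleton.elim _ _)
    exact Or.inl ⟨i, rfl⟩

lemma normalForm {n : SimplexCategory} (x : (CC A B u l m μ).obj (op n)) :
    (∃ i, x = pt u μ i n) ∨ (∃ b α, ¬ IsConst α ∧ x = ofB u μ b α) ∨
      ∃ a β, ¬ IsConst β ∧ (∃ j, β.toOrderHom j = Fin.last (l + 1)) ∧
        x = ofA u μ a β := by
  have hB (b : B) (α : n ⟶ ⦋m⦌) : (∃ i, ofB u μ b α = pt u μ i n) ∨
      ∃ b' α', ¬ IsConst α' ∧ ofB u μ b α = ofB u μ b' α' :=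
    (em (IsConst α)).imp
      (fun hα => ⟨_, (congr_arg (ofB u μ b) hα.eq_const).trans (ofB_const u μ b n _)⟩)
      (fun hα => ⟨b, α, hα, rfl⟩)
  rcases simplex_cases u μ x with h | ⟨b, α, rfl⟩ | ⟨a, β, rfl⟩
  · exact Or.inl h
  · exact (hB b α).imp_right Or.inl
  · by_cases htop : ∃ j, β.toOrderHom j = Fin.last (l + 1)
    · by_cases hβ : IsConst β
      · obtain ⟨j, hj⟩ := htop
        exact Or.inl ⟨_, by rw [hβ.eq_const, hβ 0 j, hj, ofA_const_last]⟩
      · exact Or.inr (Or.inr ⟨a, β, hβ, htop, rfl⟩)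
    · obtain ⟨γ, rfl⟩ := eq_comp_δ_of_not_surjective' β _ fun j hj => htop ⟨j, hj⟩
      rw [ofA_comp_δ_last]
      exact (hB (u a) (γ ≫ μ)).imp_right Or.inl

noncomputable def toWedge : CC A B u l m μ ⟶ Wedge B (m + 1) :=
  pushout.desc
    (pushout.desc
      (Sigma.desc fun b => SSet.yonedaEquiv.symm (Wedge.mk (δ (Fin.last (m + 1))) b))
      (Sigma.desc fun a => SSet.yonedaEquiv.symm (Wedge.mk (muPlus l m μ) (u a)))
      (Sigma.hom_ext _ _ fun a => by
        simp only [toLB, toLA1, Sigma.ι_desc_assoc, Category.assoc, Sigma.ι_desc,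
          SSet.yonedaEquiv_symm_naturality_left, Wedge.map_mk, δ_last_comp_muPlus]))
    (Sigma.desc fun i => SSet.yonedaEquiv.symm (Wedge.pt ⦋0⦌ i))
    (Sigma.hom_ext _ _ <| by
      rintro (⟨i, b⟩ | a)
      · erw [midToL, midToR, Sigma.ι_desc_assoc, Sigma.ι_desc_assoc, Category.assoc,
          Category.assoc, pushout.inl_desc, Sigma.ι_desc]
        simp [stdVert, SSet.yonedaEquiv_symm_naturality_left, Wedge.map_mk, Wedge.mk_of_zero,
          δ_last_apply]
      · erw [midToL, midToR, Sigma.ι_desc_assoc, Sigma.ι_desc_assoc, Category.assoc,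
          Category.assoc, pushout.inr_desc, Sigma.ι_desc]
        simp [stdVert, SSet.yonedaEquiv_symm_naturality_left, Wedge.map_mk, Wedge.mk_of_zero,
          muPlus_last])

lemma ιB_comp_toWedge (b : B) :
    ιB u μ b ≫ toWedge u μ = SSet.yonedaEquiv.symm (Wedge.mk (δ (Fin.last (m + 1))) b) := by
  erw [Category.assoc, Category.assoc, pushout.inl_desc, pushout.inl_desc, Sigma.ι_desc]

lemma ιA_comp_toWedge (a : A) :
    ιA u μ a ≫ toWedge u μ = SSet.yonedaEquiv.symm (Wedge.mk (muPlus l m μ) (u a)) := by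
  erw [Category.assoc, Category.assoc, pushout.inl_desc, pushout.inr_desc, Sigma.ι_desc]

lemma ιPt_comp_toWedge (i : Fin (m + 2)) :
    ιPt u μ i ≫ toWedge u μ = SSet.yonedaEquiv.symm (Wedge.pt ⦋0⦌ i) := by
  erw [Category.assoc, pushout.inr_desc, Sigma.ι_desc]

variable {n : SimplexCategory}

lemma toWedge_ofB (b : B) (α : n ⟶ ⦋m⦌) :
    (toWedge u μ).app _ (ofB u μ b α) = Wedge.mk (α ≫ δ (Fin.last (m + 1))) b := by
  erw [← NatTrans.comp_app_apply, ιB_comp_toWedge, SSet.yonedaEquiv_symm_app_objEquiv_symm,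
    Wedge.map_mk]

lemma toWedge_ofA (a : A) (β : n ⟶ ⦋l + 1⦌) :
    (toWedge u μ).app _ (ofA u μ a β) = Wedge.mk (β ≫ muPlus l m μ) (u a) := by
  erw [← NatTrans.comp_app_apply, ιA_comp_toWedge, SSet.yonedaEquiv_symm_app_objEquiv_symm,
    Wedge.map_mk]

lemma toWedge_pt (i : Fin (m + 2)) : (toWedge u μ).app _ (pt u μ i n) = Wedge.pt n i := by
  erw [← NatTrans.comp_app_apply, ιPt_comp_toWedge, SSet.yonedaEquiv_symm_app_objEquiv_symm,
    Wedge.map_pt]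

lemma toWedge_ofB_ne_toWedge_ofA (b : B) (α : n ⟶ ⦋m⦌) (a : A) (β : n ⟶ ⦋l + 1⦌)
    {j : Fin (n.len + 1)} (hj : β.toOrderHom j = Fin.last (l + 1)) :
    (toWedge u μ).app _ (ofB u μ b α) ≠ (toWedge u μ).app _ (ofA u μ a β) := by
  rw [toWedge_ofB, toWedge_ofA]
  intro h
  have h' := congr_arg (fun p => p.hom.toOrderHom j) h
  simp only [Wedge.mk, comp_toOrderHom, OrderHom.comp_coe, Function.comp_apply, hj,
    muPlus_last, δ_last_apply] at h'
  exact (Fin.castSucc_lt_last _).ne h'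

theorem mono_toWedge (hμ : Function.Injective μ.toOrderHom) (hu : Function.Injective u) :
    Mono (toWedge u μ) := by
  have hδ : Function.Injective (δ (Fin.last (m + 1))).toOrderHom :=
    mono_iff_injective.1 inferInstance
  have hμ' := muPlus_injective μ hμ
  have : Mono (muPlus l m μ) := mono_iff_injective.2 hμ'
  refine (NatTrans.mono_iff_mono_app _).2 fun ⟨n⟩ => (mono_iff_injective _).2 fun x x' h => ?_
  rcases normalForm u μ x with
      ⟨i, rfl⟩ | ⟨b, α, hα, rfl⟩ | ⟨a, β, hβ, ⟨j, hj⟩, rfl⟩ <;>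
    rcases normalForm u μ x' with
      ⟨i', rfl⟩ | ⟨b', α', hα', rfl⟩ | ⟨a', β', hβ', ⟨j', hj'⟩, rfl⟩
  · rw [toWedge_pt, toWedge_pt] at h
    rw [Wedge.pt_injective n h]
  · rw [toWedge_pt, toWedge_ofB] at h
    exact absurd h (Wedge.pt_ne_mk (not_isConst_comp hα' hδ) _ _)
  · rw [toWedge_pt, toWedge_ofA] at h
    exact absurd h (Wedge.pt_ne_mk (not_isConst_comp hβ' hμ') _ _)
  · rw [toWedge_pt, toWedge_ofB] at h
    exact absurd h.symm (Wedge.pt_ne_mk (not_isConst_comp hα hδ) _ _)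
  · rw [toWedge_ofB, toWedge_ofB, Wedge.mk_inj (not_isConst_comp hα hδ)] at h
    rw [(cancel_mono _).1 h.1, h.2]
  · exact absurd h (toWedge_ofB_ne_toWedge_ofA u μ _ _ _ _ hj')
  · rw [toWedge_pt, toWedge_ofA] at h
    exact absurd h.symm (Wedge.pt_ne_mk (not_isConst_comp hβ hμ') _ _)
  · exact absurd h.symm (toWedge_ofB_ne_toWedge_ofA u μ _ _ _ _ hj)
  · rw [toWedge_ofA, toWedge_ofA, Wedge.mk_inj (not_isConst_comp hβ hμ')] at h
    rw [(cancel_mono _).1 h.1, hu h.2]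

end CC

end Cells

/-- If the function `u : A → B` is injective, then the simplicial set
`C(μ,u)` is `1`-ordered. -/
theorem statement_4 (hμ : Function.Injective μ.toOrderHom)
    (hu : Function.Injective u) :
    Is1Ordered (CC A B u l m μ) :=
  have := CC.mono_toWedge u μ hμ hu
  (Wedge.is1Ordered B (m + 1)).of_mono (CC.toWedge u μ)

end Cone

end Paper
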